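/- Let V be a real ordered vector space (an ordered additive commutative group with an ℝ-module structure in which scalar multiplication by nonnegative reals is order preserving), and let g : Matrix (Fin d) (Fin d) ℂ → V be a map satisfying: (i) g(c • E) = c • g(E) for every real c ≥ 0 and every positive semidefinite E; (ii) g(E + F) ≤ g(E) + g(F) for all positive semidefinite E, F. If A is a measurement with n outcomes, B is a measurement with m outcomes, and A ⪯ B (A is a post-processing of B), then ∑ x, g(A x) ≤ ∑ y, g(B y). -/

import Mathlib

open Matrix
open scoped Kronecker ComplexOrder

noncomputable section

/-- A measurement (POVM): a finite family of positive semidefinite matrices summing to `1`. -/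
def IsMeasurement {ι κ : Type*} [Fintype ι] [DecidableEq ι] [Fintype κ]
    (A : κ → Matrix ι ι ℂ) : Prop :=
  (∀ x, (A x).PosSemidef) ∧ ∑ x, A x = 1

/-- `A` is a post-processing of `B`: `A ⪯ B`. -/
def PostProc {ι : Type*} {n m : ℕ}
    (A : Fin n → Matrix ι ι ℂ) (B : Fin m → Matrix ι ι ℂ) : Prop :=
  ∃ μ : Fin n → Fin m → ℝ,
    (∀ x y, 0 ≤ μ x y) ∧ (∀ y, ∑ x, μ x y = 1) ∧
    (∀ x, A x = ∑ y, (μ x y : ℂ) • B y)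

/-- The outer product `|E⟩⟨F|` of the vectorizations of two matrices. -/
def outerProd {ι : Type*} (E F : Matrix ι ι ℂ) : Matrix (ι × ι) (ι × ι) ℂ :=
  Matrix.of fun p q => E p.1 p.2 * star (F q.1 q.2)

/-- The square root of a positive semidefinite matrix, as defined in Mathlib (Dec 2024). -/
noncomputable def PosSemidef.sqrt {ι : Type*} [Fintype ι] [DecidableEq ι] {A : Matrix ι ι ℂ}
    (hA : A.PosSemidef) : Matrix ι ι ℂ :=
  hA.1.eigenvectorUnitary.1 * diagonal ((↑) ∘ (Real.sqrt ·) ∘ hA.1.eigenvalues) *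
    (star hA.1.eigenvectorUnitary : Matrix ι ι ℂ)

/-- The (un-normalized) Fisher information map of a measurement. -/
noncomputable def Fisher {ι κ : Type*} [Fintype ι] [Fintype κ]
    (A : κ → Matrix ι ι ℂ) : Matrix (ι × ι) (ι × ι) ℂ :=
  ∑ x, (Matrix.trace (A x))⁻¹ • outerProd (A x) (A x)

/-- The generalized Fisher information map of a measurement, relative to a
positive definite state `ρ` (with positive semidefinite square root `ρ^{1/2}`). -/
noncomputable def FisherRho {ι κ : Type*} [Fintype ι] [DecidableEq ι] [Fintype κ]
    {ρ : Matrix ι ι ℂ} (hρ : ρ.PosDef) (A : κ → Matrix ι ι ℂ) :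
    Matrix (ι × ι) (ι × ι) ℂ :=
  ∑ x, (Matrix.trace (ρ * A x))⁻¹ •
    outerProd (PosSemidef.sqrt hρ.posSemidef * A x) (PosSemidef.sqrt hρ.posSemidef * A x)

/-- The height of a finite family of self-adjoint matrices: the infimum of the traces of
Hermitian matrices dominating every member in the Loewner order. -/
noncomputable def height {ι κ : Type*} [Fintype ι] [Fintype κ]
    (X : κ → Matrix ι ι ℂ) : ℝ :=
  sInf { t : ℝ | ∃ H : Matrix ι ι ℂ, H.IsHermitian ∧
    (∀ i, (H - X i).PosSemidef) ∧ t = (Matrix.trace H).re }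
/-- The class `OrderedSMul` of Mathlib (Dec 2024), removed since. -/
class OrderedSMul (R M : Type*) [Zero R] [LT R] [LT M] [SMul R M] : Prop where
  protected smul_lt_smul_of_pos : ∀ {a b : M}, ∀ {c : R}, a < b → 0 < c → c • a < c • b
  protected lt_of_smul_lt_smul_of_pos : ∀ {a b : M}, ∀ {c : R}, c • a < c • b → 0 < c → a < b

theorem map_zero_of_posHomogeneous {ι V : Type*} [AddCommGroup V] [Module ℝ V]
    {g : Matrix ι ι ℂ → V}
    (h1 : ∀ (c : ℝ) (E : Matrix ι ι ℂ), 0 ≤ c → E.PosSemidef → g ((c : ℂ) • E) = c • g E) :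
    g 0 = 0 := by
  simpa using h1 0 0 le_rfl .zero

section

variable {ι V : Type*} [AddCommGroup V] [PartialOrder V] [IsOrderedAddMonoid V]
  [Module ℝ V] {g : Matrix ι ι ℂ → V}

theorem map_sum_smul_le {κ : Type*} [Fintype κ]
    (h1 : ∀ (c : ℝ) (E : Matrix ι ι ℂ), 0 ≤ c → E.PosSemidef → g ((c : ℂ) • E) = c • g E)
    (h2 : ∀ E F : Matrix ι ι ℂ, E.PosSemidef → F.PosSemidef → g (E + F) ≤ g E + g F)
    {μ : κ → ℝ} (hμ : ∀ y, 0 ≤ μ y) {B : κ → Matrix ι ι ℂ} (hB : ∀ y, (B y).PosSemidef) :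
    g (∑ y, (μ y : ℂ) • B y) ≤ ∑ y, μ y • g (B y) := by
  have hμB : ∀ y, ((μ y : ℂ) • B y).PosSemidef := fun y =>
    (hB y).smul (Complex.zero_le_real.mpr (hμ y))
  calc g (∑ y, (μ y : ℂ) • B y) ≤ ∑ y, g ((μ y : ℂ) • B y) :=
        Finset.le_sum_of_subadditive_on_pred g Matrix.PosSemidef
          (map_zero_of_posHomogeneous h1).le h2 (fun _ _ => .add) _ fun y _ => hμB y
    _ = ∑ y, μ y • g (B y) := by
        simp only [h1 _ _ (hμ _) (hB _)]

theorem sum_map_le_of_stochastic {κ ν : Type*} [Fintype κ] [Fintype ν]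
    (h1 : ∀ (c : ℝ) (E : Matrix ι ι ℂ), 0 ≤ c → E.PosSemidef → g ((c : ℂ) • E) = c • g E)
    (h2 : ∀ E F : Matrix ι ι ℂ, E.PosSemidef → F.PosSemidef → g (E + F) ≤ g E + g F)
    {μ : κ → ν → ℝ} (hμ0 : ∀ x y, 0 ≤ μ x y) (hμ1 : ∀ y, ∑ x, μ x y = 1)
    {B : ν → Matrix ι ι ℂ} (hB : ∀ y, (B y).PosSemidef) :
    ∑ x, g (∑ y, (μ x y : ℂ) • B y) ≤ ∑ y, g (B y) :=
  calc ∑ x, g (∑ y, (μ x y : ℂ) • B y) ≤ ∑ x, ∑ y, μ x y • g (B y) :=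
        Finset.sum_le_sum fun x _ => map_sum_smul_le h1 h2 (hμ0 x) hB
    _ = ∑ y, g (B y) := by
        rw [Finset.sum_comm]
        simp only [← Finset.sum_smul, hμ1, one_smul]

end

theorem stmt2_general {V : Type*} [AddCommGroup V] [PartialOrder V] [IsOrderedAddMonoid V] [Module ℝ V]
    {d n m : ℕ} (g : Matrix (Fin d) (Fin d) ℂ → V)
    (h1 : ∀ (c : ℝ) (E : Matrix (Fin d) (Fin d) ℂ), 0 ≤ c → E.PosSemidef →
      g ((c : ℂ) • E) = c • g E)
    (h2 : ∀ E F : Matrix (Fin d) (Fin d) ℂ, E.PosSemidef → F.PosSemidef →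
      g (E + F) ≤ g E + g F)
    (A : Fin n → Matrix (Fin d) (Fin d) ℂ) (B : Fin m → Matrix (Fin d) (Fin d) ℂ)
    (hB : IsMeasurement B) (hAB : PostProc A B) :
    ∑ x, g (A x) ≤ ∑ y, g (B y) := by
  obtain ⟨μ, hμ0, hμ1, hA⟩ := hAB
  simp only [hA]
  exact sum_map_le_of_stochastic h1 h2 hμ0 hμ1 hB.1

/-- An order morphism induces an order preserving map on measurements. -/
theorem stmt2 {V : Type*} [AddCommGroup V] [PartialOrder V] [IsOrderedAddMonoid V] [Module ℝ V] [OrderedSMul ℝ V]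
    {d n m : ℕ} (g : Matrix (Fin d) (Fin d) ℂ → V)
    (h1 : ∀ (c : ℝ) (E : Matrix (Fin d) (Fin d) ℂ), 0 ≤ c → E.PosSemidef →
      g ((c : ℂ) • E) = c • g E)
    (h2 : ∀ E F : Matrix (Fin d) (Fin d) ℂ, E.PosSemidef → F.PosSemidef →
      g (E + F) ≤ g E + g F)
    (A : Fin n → Matrix (Fin d) (Fin d) ℂ) (B : Fin m → Matrix (Fin d) (Fin d) ℂ)
    (hA : IsMeasurement A) (hB : IsMeasurement B) (hAB : PostProc A B) :
    ∑ x, g (A x) ≤ ∑ y, g (B y) :=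
  stmt2_general g h1 h2 A B hB hAB
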